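/- If C is a binary self-dual doubly-even (Type II) code of length n, then 8 divides n. -/

import Mathlib

/-- Hamming weight of a binary vector. -/
def wt {n : ℕ} (x : Fin n → ZMod 2) : ℕ :=
  (Finset.univ.filter fun i => x i ≠ 0).card

/-- Dual code with respect to the standard bilinear form. -/
def dualCode {n : ℕ} (C : Submodule (ZMod 2) (Fin n → ZMod 2)) :
    Submodule (ZMod 2) (Fin n → ZMod 2) where
  carrier := {x | ∀ c ∈ C, ∑ i, x i * c i = 0}
  add_mem' := by
    intro a b ha hb c hc
    have ha' := ha c hc
    have hb' := hb c hc
    simp only [Set.mem_setOf_eq, Pi.add_apply, add_mul] at *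
    rw [Finset.sum_add_distrib, ha', hb', add_zero]
  zero_mem' := by
    intro c hc
    simp
  smul_mem' := by
    intro r a ha c hc
    have ha' := ha c hc
    simp only [Set.mem_setOf_eq, Pi.smul_apply, smul_eq_mul, mul_assoc] at *
    rw [← Finset.mul_sum, ha', mul_zero]

/-- Minimum distance (minimum nonzero Hamming weight) of a binary linear code. -/
noncomputable def minDist {n : ℕ} (C : Submodule (ZMod 2) (Fin n → ZMod 2)) : ℕ :=
  sInf {w | ∃ c ∈ C, c ≠ 0 ∧ wt c = w}

/-- Number of codewords of weight `w` in `C` (the weight distribution `A_w`). -/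
noncomputable def wtCount {n : ℕ} (C : Submodule (ZMod 2) (Fin n → ZMod 2)) (w : ℕ) : ℕ :=
  Nat.card {c : Fin n → ZMod 2 // c ∈ C ∧ wt c = w}

/-!
Poisson summation over `C` gives
`∑ c ∈ C, ∑ u, (-1) ^ (u ⬝ᵥ c) * i ^ wt u = |C| * ∑ u ∈ C^⊥, i ^ wt u`.
Since `C^⊥ = C` is doubly even, the right side is `|C| ^ 2`. The inner sum on the left is
`(1 + i) ^ (n - wt c) * (1 - i) ^ wt c`, which equals `(1 + i) ^ n` because `4 ∣ wt c` and
`(1 - i) ^ 4 = (1 + i) ^ 4`. Hence `(1 + i) ^ n = |C|` is a positive integer, and as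
`1 + i = √2 e^{iπ/4}` this forces `8 ∣ n`.
-/

open Complex Finset

lemma AddChar.map_sum_eq_prod {ι A M : Type*} [AddCommMonoid A] [CommMonoid M] (ψ : AddChar A M)
    (s : Finset ι) (f : ι → A) : ψ (∑ i ∈ s, f i) = ∏ i ∈ s, ψ (f i) :=
  map_prod ψ.toMonoidHom (fun i => Multiplicative.ofAdd (f i)) s

lemma ZMod.eq_zero_or_eq_one (b : ZMod 2) : b = 0 ∨ b = 1 := by
  revert b; decide

lemma ZMod.sum_univ_two {M : Type*} [AddCommMonoid M] (f : ZMod 2 → M) : ∑ b, f b = f 0 + f 1 :=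
  Fin.sum_univ_two f

noncomputable def signChar : AddChar (ZMod 2) ℂ where
  toFun b := if b = 0 then 1 else -1
  map_zero_eq_one' := if_pos rfl
  map_add_eq_mul' a b := by
    rcases a.eq_zero_or_eq_one with rfl | rfl <;>
      rcases b.eq_zero_or_eq_one with rfl | rfl <;>
      simp [show (1 + 1 : ZMod 2) = 0 from rfl]

lemma signChar_eq_one_iff {b : ZMod 2} : signChar b = 1 ↔ b = 0 := by
  fin_cases b <;> norm_num [signChar]

section Code

variable {n : ℕ}

lemma wt_le (c : Fin n → ZMod 2) : wt c ≤ n :=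
  (card_filter_le _ _).trans_eq (card_fin n)

lemma prod_ite_eq_zero_eq_pow_mul_pow {M : Type*} [CommMonoid M] (u : Fin n → ZMod 2) (x y : M) :
    ∏ i, (if u i = 0 then x else y) = x ^ (n - wt u) * y ^ wt u := by
  have hcard : #{i | u i = 0} + wt u = n :=
    (card_filter_add_card_filter_not _).trans (card_fin n)
  rw [prod_ite, prod_const, prod_const, Nat.eq_sub_of_add_eq hcard]
  rfl

lemma sum_signChar_dotProduct_mul_pow_mul_pow (x y : ℂ) (c : Fin n → ZMod 2) :
    ∑ u : Fin n → ZMod 2, signChar (u ⬝ᵥ c) * (x ^ (n - wt u) * y ^ wt u)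
      = (x + y) ^ (n - wt c) * (x - y) ^ wt c := by
  have hfactor (u : Fin n → ZMod 2) : signChar (u ⬝ᵥ c) * (x ^ (n - wt u) * y ^ wt u)
      = ∏ i, signChar (u i * c i) * (if u i = 0 then x else y) := by
    rw [prod_mul_distrib, prod_ite_eq_zero_eq_pow_mul_pow, dotProduct, AddChar.map_sum_eq_prod]
  simp_rw [hfactor]
  rw [← Fintype.prod_sum (fun i b => signChar (b * c i) * (if b = 0 then x else y)),
    ← prod_ite_eq_zero_eq_pow_mul_pow]
  refine prod_congr rfl fun i _ => ?_
  rcases (c i).eq_zero_or_eq_one with h | h <;>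
    simp [h, ZMod.sum_univ_two, signChar, sub_eq_add_neg]

open scoped Classical in
lemma sum_code_signChar_dotProduct (C : Submodule (ZMod 2) (Fin n → ZMod 2))
    (u : Fin n → ZMod 2) :
    ∑ c : C, signChar (u ⬝ᵥ c) = if u ∈ dualCode C then (Fintype.card C : ℂ) else 0 := by
  let ψ : AddChar C ℂ := signChar.compAddMonoidHom
    ((dotProductBilin (ZMod 2) (ZMod 2) u).comp C.subtype).toAddMonoidHom
  have hψ : ψ = 0 ↔ u ∈ dualCode C := by
    rw [AddChar.eq_zero_iff]
    exact ⟨fun h c hc => signChar_eq_one_iff.1 (h ⟨c, hc⟩),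
      fun h c => signChar_eq_one_iff.2 (h c c.2)⟩
  rw [← if_congr hψ rfl rfl]
  exact ψ.sum_eq_ite

open scoped Classical in
/-- Poisson summation over a binary linear code. -/
lemma sum_code_sum_signChar_dotProduct_mul (C : Submodule (ZMod 2) (Fin n → ZMod 2))
    (F : (Fin n → ZMod 2) → ℂ) :
    ∑ c : C, ∑ u, signChar (u ⬝ᵥ c) * F u =
      Fintype.card C * ∑ u with u ∈ dualCode C, F u := by
  rw [sum_comm, sum_filter, mul_sum]
  refine sum_congr rfl fun u _ => ?_
  rw [← sum_mul, sum_code_signChar_dotProduct]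
  split_ifs <;> simp

end Code

/-- `(1 + I) ^ 8 = 16`, while `(1 + I) ^ r` is not a nonnegative real for `0 < r < 8`. -/
lemma eight_dvd_of_one_add_I_pow_eq_natCast {n m : ℕ} (h : (1 + I) ^ n = m) : 8 ∣ n := by
  have h8 : (1 + I) ^ 8 = ((16 : ℕ) : ℂ) := by
    have h2 : (1 + I) ^ 2 = 2 * I := by linear_combination I_sq
    rw [show 8 = 2 * 4 by rfl, pow_mul, h2, mul_pow, I_pow_four]; norm_num
  rw [← Nat.div_add_mod n 8, pow_add, pow_mul, h8, ← Nat.cast_pow] at h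
  have hpos : 0 < 16 ^ (n / 8) := by positivity
  have := Nat.mod_lt n (show 8 > 0 by norm_num)
  interval_cases hr : n % 8
  · exact Nat.dvd_of_mod_eq_zero hr
  all_goals
    generalize 16 ^ (n / 8) = N at h hpos
    apply_fun fun z => (z.re, z.im) at h
    norm_num [pow_succ] at h
    have : (0 : ℝ) ≤ m := m.cast_nonneg
    have : (0 : ℝ) < N := by exact_mod_cast hpos
    first | omega | linarith

lemma one_add_I_pow_sub_mul_one_sub_I_pow {k n : ℕ} (hk : 4 ∣ k) (hkn : k ≤ n) :
    (1 + I) ^ (n - k) * (1 - I) ^ k = (1 + I) ^ n := by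
  have h4 : (1 - I) ^ 4 = (1 + I) ^ 4 := by linear_combination (-8 * I) * I_sq
  obtain ⟨j, rfl⟩ := hk
  rw [pow_mul, h4, ← pow_mul, ← pow_add, Nat.sub_add_cancel hkn]

/-- The length of a binary self-dual doubly-even (Type II) code is divisible by 8. -/
theorem stmt_16 (n : ℕ) (C : Submodule (ZMod 2) (Fin n → ZMod 2))
    (hsd : dualCode C = C) (hde : ∀ c ∈ C, 4 ∣ wt c) : 8 ∣ n := by
  classical
  let F : (Fin n → ZMod 2) → ℂ := fun u => 1 ^ (n - wt u) * I ^ wt u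
  have htransform (c : Fin n → ZMod 2) (hc : c ∈ C) :
      ∑ u, signChar (u ⬝ᵥ c) * F u = (1 + I) ^ n := by
    rw [sum_signChar_dotProduct_mul_pow_mul_pow,
      one_add_I_pow_sub_mul_one_sub_I_pow (hde c hc) (wt_le c)]
  have hF (u : Fin n → ZMod 2) (hu : u ∈ C) : F u = 1 := by
    obtain ⟨k, hk⟩ := hde u hu
    simp only [F, one_pow, one_mul]
    rw [hk, pow_mul, I_pow_four, one_pow]
  have hpoisson : (Fintype.card C : ℂ) * (1 + I) ^ n = Fintype.card C * Fintype.card C :=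
    calc (Fintype.card C : ℂ) * (1 + I) ^ n = ∑ c : C, ∑ u, signChar (u ⬝ᵥ c) * F u := by
          simp [htransform]
      _ = Fintype.card C * ∑ u with u ∈ C, F u := by
          rw [sum_code_sum_signChar_dotProduct_mul, hsd]
      _ = Fintype.card C * Fintype.card C := by
          rw [sum_congr rfl fun u hu => hF u (mem_filter.1 hu).2, sum_const,
            ← Fintype.card_subtype, nsmul_one]
  have hC : (Fintype.card C : ℂ) ≠ 0 := Nat.cast_ne_zero.2 Fintype.card_ne_zero
  exact eight_dvd_of_one_add_I_pow_eq_natCast (mul_left_cancel₀ hC hpoisson)
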